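/- arXiv:1912.00406 — 5 statements merged into one kernel-verified Lean document; each statement's English description precedes it below -/
import Mathlib

section
/- For a > 0, μ > 0 and integer p ≥ 1, ∫_0^∞ ln(1 + a x) e^{-μ x} x^{p-1} dx = (p-1)! · e^{μ/a} · μ^{-p} · ∑_{q=1}^{p} E_q(μ/a), where E_q is the generalized exponential integral. -/
/-!
Write `y = μ / a`, `K_m = ∫₀^∞ log (1 + a x) e^{-μx} x^m dx` and
`J_m = ∫₀^∞ x^m e^{-μx} / (1 + a x) dx`. Integrating `log (1 + a x) e^{-μx} x^m` by parts
gives `μ K_m = m K_{m-1} + a J_m`. The substitution `t = 1 + a x` gives `J_0 = e^y E_1(y) / a`, and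
`x^{m+1} / (1 + a x) = (x^m - x^m / (1 + a x)) / a` together with the recurrence
`y E_q(y) + q E_{q+1}(y) = e^{-y}` (integration by parts in `E_q`) gives
`J_m = m! e^y E_{m+1}(y) / (a μ^m)`. Hence `μ^{m+1} K_m / m!` telescopes to
`e^y (E_1(y) + ⋯ + E_{m+1}(y))`.
-/

open Real MeasureTheory

/-- The generalized exponential integral `E_q(x) = ∫_1^∞ e^{-xt}/t^q dt`. -/
noncomputable def genExpInt (q : ℕ) (x : ℝ) : ℝ :=
  ∫ t in Set.Ioi (1:ℝ), Real.exp (-x * t) / t ^ q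

open Set Filter Topology
open scoped Nat

theorem integral_pow_mul_exp_neg_mul_Ioi {μ : ℝ} (hμ : 0 < μ) (k : ℕ) :
    ∫ x in Ioi (0 : ℝ), x ^ k * exp (-μ * x) = k ! / μ ^ (k + 1) := by
  have h := integral_rpow_mul_exp_neg_mul_Ioi (a := (k : ℝ) + 1) (by positivity) hμ
  rw [add_sub_cancel_right, Gamma_nat_eq_factorial, ← Nat.cast_add_one, rpow_natCast] at h
  simp_rw [rpow_natCast, neg_mul] at h ⊢
  rw [h, div_pow, one_pow, one_div_mul_eq_div]

theorem integrableOn_pow_mul_exp_neg_mul_Ioi {μ : ℝ} (hμ : 0 < μ) (k : ℕ) :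
    IntegrableOn (fun x : ℝ => x ^ k * exp (-μ * x)) (Ioi 0) :=
  .of_integral_ne_zero <| by rw [integral_pow_mul_exp_neg_mul_Ioi hμ]; positivity

theorem tendsto_pow_mul_exp_neg_mul_atTop {μ : ℝ} (hμ : 0 < μ) (k : ℕ) :
    Tendsto (fun x : ℝ => x ^ k * exp (-μ * x)) atTop (𝓝 0) := by
  simpa only [rpow_natCast] using tendsto_rpow_mul_exp_neg_mul_atTop_nhds_zero k μ hμ

theorem integrableOn_exp_neg_mul_div_pow_Ioi_one {y : ℝ} (hy : 0 < y) (q : ℕ) :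
    IntegrableOn (fun t : ℝ => exp (-y * t) / t ^ q) (Ioi 1) := by
  refine (exp_neg_integrableOn_Ioi 1 hy).mono' (Measurable.aestronglyMeasurable (by fun_prop)) ?_
  filter_upwards [ae_restrict_mem measurableSet_Ioi] with t (ht : 1 < t)
  rw [norm_of_nonneg (div_nonneg (exp_pos _).le (pow_nonneg (by linarith) _))]
  exact div_le_self (exp_pos _).le (one_le_pow₀ ht.le)

theorem tendsto_exp_neg_mul_div_pow_atTop {y : ℝ} (hy : 0 < y) (q : ℕ) :
    Tendsto (fun t : ℝ => exp (-y * t) / t ^ q) atTop (𝓝 0) := by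
  refine squeeze_zero' ?_ ?_
    (by simpa only [pow_zero, one_mul] using tendsto_pow_mul_exp_neg_mul_atTop hy 0)
  · filter_upwards [eventually_ge_atTop 0] with t ht
    exact div_nonneg (exp_pos _).le (pow_nonneg ht _)
  · filter_upwards [eventually_ge_atTop 1] with t ht
    exact div_le_self (exp_pos _).le (one_le_pow₀ ht)

theorem hasDerivAt_neg_exp_neg_mul_div_pow {y t : ℝ} (ht : t ≠ 0) (q : ℕ) :
    HasDerivAt (fun t : ℝ => -(exp (-y * t) / t ^ q))
      (y * (exp (-y * t) / t ^ q) + q * (exp (-y * t) / t ^ (q + 1))) t := by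
  have hexp : HasDerivAt (fun t : ℝ => exp (-y * t)) (exp (-y * t) * -y) t := by
    simpa using ((hasDerivAt_id t).const_mul (-y)).exp
  refine (hexp.div (hasDerivAt_pow q t) (pow_ne_zero q ht)).neg.congr_deriv ?_
  rcases q with _ | q
  · simp [mul_comm]
  · field_simp
    push_cast
    ring

theorem genExpInt_recurrence {y : ℝ} (hy : 0 < y) (q : ℕ) :
    y * genExpInt q y + q * genExpInt (q + 1) y = exp (-y) := by
  have hint := integrableOn_exp_neg_mul_div_pow_Ioi_one hy
  have ftc := integral_Ioi_of_hasDerivAt_of_tendsto'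
    (fun t (ht : 1 ≤ t) => hasDerivAt_neg_exp_neg_mul_div_pow (by positivity) q)
    (((hint q).const_mul y).add ((hint (q + 1)).const_mul q))
    (tendsto_exp_neg_mul_div_pow_atTop hy q).neg
  rw [integral_add ((hint q).const_mul y) ((hint (q + 1)).const_mul q), integral_const_mul,
    integral_const_mul] at ftc
  simpa [genExpInt] using ftc

theorem integral_comp_add_mul_Ioi {E : Type*} [NormedAddCommGroup E] [NormedSpace ℝ E]
    (g : ℝ → E) (c : ℝ) {b : ℝ} (hb : 0 < b) :
    ∫ x in Ioi (0 : ℝ), g (c + b * x) = b⁻¹ • ∫ t in Ioi c, g t := by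
  have hshift : ∫ s in Ioi (0 : ℝ), g (c + s) = ∫ t in Ioi c, g t := by
    simpa using (measurePreserving_add_left volume c).setIntegral_preimage_emb
      (measurableEmbedding_addLeft c) g (Ioi c)
  rw [integral_comp_mul_left_Ioi (fun s => g (c + s)) 0 hb, mul_zero, hshift]

theorem integral_exp_neg_mul_div_one_add_mul_pow {a : ℝ} (ha : 0 < a) (μ : ℝ) (q : ℕ) :
    ∫ x in Ioi (0 : ℝ), exp (-μ * x) / (1 + a * x) ^ q
      = exp (μ / a) / a * genExpInt q (μ / a) := by
  have hexp (x : ℝ) : exp (-μ * x) = exp (μ / a) * exp (-(μ / a) * (1 + a * x)) := by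
    rw [← exp_add]
    congr 1
    field_simp
    ring
  simp_rw [hexp, mul_div_assoc]
  rw [integral_const_mul, integral_comp_add_mul_Ioi (fun t => exp (-(μ / a) * t) / t ^ q) 1 ha,
    smul_eq_mul, genExpInt]
  ring

theorem integrableOn_pow_mul_exp_neg_mul_div_one_add_mul {a μ : ℝ} (ha : 0 ≤ a) (hμ : 0 < μ)
    (k : ℕ) :
    IntegrableOn (fun x : ℝ => x ^ k * exp (-μ * x) / (1 + a * x)) (Ioi 0) := by
  refine (integrableOn_pow_mul_exp_neg_mul_Ioi hμ k).mono'
    (Measurable.aestronglyMeasurable (by fun_prop)) ?_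
  filter_upwards [ae_restrict_mem measurableSet_Ioi] with x (hx : 0 < x)
  have hden : 1 ≤ 1 + a * x := le_add_of_nonneg_right (by positivity)
  rw [norm_of_nonneg (by positivity)]
  exact div_le_self (by positivity) hden

theorem integral_pow_mul_exp_neg_mul_div_one_add_mul {a μ : ℝ} (ha : 0 < a) (hμ : 0 < μ)
    (k : ℕ) :
    ∫ x in Ioi (0 : ℝ), x ^ k * exp (-μ * x) / (1 + a * x)
      = k ! / (a * μ ^ k) * exp (μ / a) * genExpInt (k + 1) (μ / a) := by
  induction k with
  | zero =>
    simpa [div_eq_inv_mul, mul_comm, mul_left_comm, mul_assoc] using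
      integral_exp_neg_mul_div_one_add_mul_pow ha μ 1
  | succ k ih =>
    have hsplit : ∀ x ∈ Ioi (0 : ℝ), x ^ (k + 1) * exp (-μ * x) / (1 + a * x)
        = a⁻¹ * (x ^ k * exp (-μ * x)) - a⁻¹ * (x ^ k * exp (-μ * x) / (1 + a * x)) := by
      intro x (hx : 0 < x)
      have : 0 < 1 + a * x := by positivity
      field_simp
      ring
    rw [setIntegral_congr_fun measurableSet_Ioi hsplit,
      integral_sub ((integrableOn_pow_mul_exp_neg_mul_Ioi hμ k).const_mul _)
        ((integrableOn_pow_mul_exp_neg_mul_div_one_add_mul ha.le hμ k).const_mul _),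
      integral_const_mul, integral_const_mul, integral_pow_mul_exp_neg_mul_Ioi hμ, ih]
    have hrec := genExpInt_recurrence (div_pos hμ ha) (k + 1)
    rw [exp_neg] at hrec
    rw [Nat.factorial_succ]
    field_simp at hrec ⊢
    push_cast at hrec ⊢
    linear_combination -(k ! * μ ^ k) * hrec

theorem norm_log_one_add_mul_mul_exp_neg_mul_pow_le {a x : ℝ} (ha : 0 ≤ a) (hx : 0 ≤ x)
    (μ : ℝ) (k : ℕ) :
    ‖log (1 + a * x) * exp (-μ * x) * x ^ k‖ ≤ a * (x ^ (k + 1) * exp (-μ * x)) := by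
  have hax : 0 ≤ a * x := mul_nonneg ha hx
  have hlog : ‖log (1 + a * x)‖ ≤ a * x := by
    rw [norm_of_nonneg (log_nonneg (by linarith))]
    linarith [log_le_sub_one_of_pos (by linarith : 0 < 1 + a * x)]
  calc ‖log (1 + a * x) * exp (-μ * x) * x ^ k‖
      = ‖log (1 + a * x)‖ * (x ^ k * exp (-μ * x)) := by
        rw [norm_mul, norm_mul, norm_of_nonneg (exp_pos _).le, norm_of_nonneg (pow_nonneg hx k)]
        ring
    _ ≤ a * x * (x ^ k * exp (-μ * x)) := by gcongr
    _ = a * (x ^ (k + 1) * exp (-μ * x)) := by ring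

theorem integrableOn_log_one_add_mul_mul_exp_neg_mul_pow {a μ : ℝ} (ha : 0 ≤ a) (hμ : 0 < μ)
    (k : ℕ) :
    IntegrableOn (fun x : ℝ => log (1 + a * x) * exp (-μ * x) * x ^ k) (Ioi 0) := by
  refine ((integrableOn_pow_mul_exp_neg_mul_Ioi hμ (k + 1)).const_mul a).mono'
    (Measurable.aestronglyMeasurable (by fun_prop)) ?_
  filter_upwards [ae_restrict_mem measurableSet_Ioi] with x (hx : 0 < x)
  exact norm_log_one_add_mul_mul_exp_neg_mul_pow_le ha hx.le μ k

theorem tendsto_log_one_add_mul_mul_exp_neg_mul_pow_atTop {a μ : ℝ} (ha : 0 ≤ a)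
    (hμ : 0 < μ) (k : ℕ) :
    Tendsto (fun x : ℝ => log (1 + a * x) * exp (-μ * x) * x ^ k) atTop (𝓝 0) := by
  refine squeeze_zero_norm' ?_
    (by simpa only [mul_zero] using (tendsto_pow_mul_exp_neg_mul_atTop hμ (k + 1)).const_mul a)
  filter_upwards [eventually_ge_atTop 0] with x hx
  exact norm_log_one_add_mul_mul_exp_neg_mul_pow_le ha hx μ k

theorem hasDerivAt_log_one_add_mul_mul_exp_neg_mul_pow {a x : ℝ} (hx : 0 < 1 + a * x)
    (μ : ℝ) (m : ℕ) :
    HasDerivAt (fun x : ℝ => log (1 + a * x) * exp (-μ * x) * x ^ m)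
      (a * (x ^ m * exp (-μ * x) / (1 + a * x))
        + (m * (log (1 + a * x) * exp (-μ * x) * x ^ (m - 1))
          - μ * (log (1 + a * x) * exp (-μ * x) * x ^ m))) x := by
  have hlog : HasDerivAt (fun x : ℝ => log (1 + a * x)) (a / (1 + a * x)) x := by
    simpa using (((hasDerivAt_id x).const_mul a).const_add 1).log hx.ne'
  have hexp : HasDerivAt (fun x : ℝ => exp (-μ * x)) (exp (-μ * x) * -μ) x := by
    simpa using ((hasDerivAt_id x).const_mul (-μ)).exp
  exact ((hlog.fun_mul hexp).fun_mul (hasDerivAt_pow m x)).congr_deriv (by ring)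

theorem integral_log_one_add_mul_mul_exp_neg_mul_pow_ibp {a μ : ℝ} (ha : 0 < a) (hμ : 0 < μ)
    (m : ℕ) :
    μ * ∫ x in Ioi (0 : ℝ), log (1 + a * x) * exp (-μ * x) * x ^ m
      = m * (∫ x in Ioi (0 : ℝ), log (1 + a * x) * exp (-μ * x) * x ^ (m - 1))
        + a * ∫ x in Ioi (0 : ℝ), x ^ m * exp (-μ * x) / (1 + a * x) := by
  have hK := integrableOn_log_one_add_mul_mul_exp_neg_mul_pow ha.le hμ
  have hJ : IntegrableOn (fun x => a * (x ^ m * exp (-μ * x) / (1 + a * x))) (Ioi 0) :=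
    (integrableOn_pow_mul_exp_neg_mul_div_one_add_mul ha.le hμ m).const_mul a
  have hKK : IntegrableOn (fun x => m * (log (1 + a * x) * exp (-μ * x) * x ^ (m - 1))
      - μ * (log (1 + a * x) * exp (-μ * x) * x ^ m)) (Ioi 0) :=
    ((hK (m - 1)).const_mul m).sub ((hK m).const_mul μ)
  have ftc := integral_Ioi_of_hasDerivAt_of_tendsto'
    (fun x (hx : 0 ≤ x) => hasDerivAt_log_one_add_mul_mul_exp_neg_mul_pow (by positivity) μ m)
    (hJ.add hKK) (tendsto_log_one_add_mul_mul_exp_neg_mul_pow_atTop ha.le hμ m)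
  rw [integral_add hJ hKK, integral_sub ((hK (m - 1)).const_mul m) ((hK m).const_mul μ),
    integral_const_mul, integral_const_mul, integral_const_mul] at ftc
  simp only [mul_zero, add_zero, log_one, zero_mul, sub_zero] at ftc
  linarith

theorem integral_log_one_add_mul_mul_exp_neg_mul_pow {a μ : ℝ} (ha : 0 < a) (hμ : 0 < μ)
    (k : ℕ) :
    ∫ x in Ioi (0 : ℝ), log (1 + a * x) * exp (-μ * x) * x ^ k
      = k ! * exp (μ / a) / μ ^ (k + 1) *
        ∑ q ∈ Finset.Icc 1 (k + 1), genExpInt q (μ / a) := by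
  induction k with
  | zero =>
    have h := integral_log_one_add_mul_mul_exp_neg_mul_pow_ibp ha hμ 0
    rw [integral_pow_mul_exp_neg_mul_div_one_add_mul ha hμ 0] at h
    rw [Finset.Icc_self, Finset.sum_singleton]
    field_simp at h ⊢
    linear_combination h
  | succ k ih =>
    have h := integral_log_one_add_mul_mul_exp_neg_mul_pow_ibp ha hμ (k + 1)
    rw [Nat.add_sub_cancel, ih,
      integral_pow_mul_exp_neg_mul_div_one_add_mul ha hμ (k + 1)] at h
    rw [Finset.sum_Icc_succ_top (by omega)]
    field_simp at h ⊢
    push_cast [Nat.factorial_succ] at h ⊢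
    linear_combination h

theorem stmt1 (a μ : ℝ) (ha : 0 < a) (hμ : 0 < μ) (p : ℕ) (hp : 1 ≤ p) :
    ∫ x in Set.Ioi (0:ℝ), Real.log (1 + a * x) * Real.exp (-μ * x) * x ^ (p - 1) =
      ((p - 1).factorial : ℝ) * Real.exp (μ / a) * μ ^ (-(p : ℤ)) *
        ∑ q ∈ Finset.Icc 1 p, genExpInt q (μ / a) := by
  obtain ⟨k, rfl⟩ := Nat.exists_eq_add_of_le' hp
  rw [Nat.add_sub_cancel, integral_log_one_add_mul_mul_exp_neg_mul_pow ha hμ, zpow_neg,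
    zpow_natCast, div_eq_mul_inv]
end

section
/- Let X ~ Exponential(1) (i.e., Gamma(1,1)) and Y ~ Gamma(M−1, 1) be independent, with M ≥ 2 an integer, and let μ > 0, ν > 0 with μ ≠ ν. Then the density of J = μX + νY at x > 0 equals ((-1)^{M-1} μ^{M-2}/(ν−μ)^{M-1}) e^{-x/μ} + ∑_{p=1}^{M-1} ((-μ)^{p-1} / ((M−1−p)! (ν−μ)^p ν^{M−1−p})) x^{M−1−p} e^{-x/ν}. -/
/-!
Writing `e^{-(x-t)/μ} e^{-t/ν} = e^{-x/μ} e^{-a t}` with `a = 1/ν - 1/μ ≠ 0`, the convolution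
integral becomes `e^{-x/μ} ∫₀ˣ tⁿ e^{-a t} dt` (`n = M - 2`). Repeated integration by parts gives
this integral in closed form, `n!/a^{n+1} - e^{-a x} ∑_{j ≤ n} n!/((n-j)! a^{j+1}) x^{n-j}`; the
constant term produces the `e^{-x/μ}` summand and the `j`-th term the `p = j + 1` summand, once
`1/a = μν/(μ-ν)` is substituted.
-/

open Real MeasureTheory Finset Nat

noncomputable def powExpPoly (a : ℝ) (n : ℕ) (y : ℝ) : ℝ :=
  ∑ j ∈ range (n + 1), (n ! : ℝ) / ((n - j)! * a ^ (j + 1)) * y ^ (n - j)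

lemma powExpPoly_zero_right (a : ℝ) (n : ℕ) : powExpPoly a n 0 = n ! / a ^ (n + 1) := by
  rw [powExpPoly, sum_eq_single_of_mem n (self_mem_range_succ n)]
  · simp
  · intro j hj _
    rw [zero_pow (by grind), mul_zero]

lemma powExpPoly_succ {a : ℝ} (ha : a ≠ 0) (n : ℕ) (y : ℝ) :
    powExpPoly a (n + 1) y = y ^ (n + 1) / a + (n + 1) / a * powExpPoly a n y := by
  rw [powExpPoly, sum_range_succ', powExpPoly, mul_sum, add_comm]
  congr 1
  · simp only [tsub_zero, zero_add, pow_one]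
    field_simp
  · refine sum_congr rfl fun j _ => ?_
    rw [Nat.succ_sub_succ, Nat.factorial_succ]
    push_cast
    field_simp
    ring

lemma hasDerivAt_exp_neg_mul (a x : ℝ) :
    HasDerivAt (fun y => exp (-(a * y))) (-a * exp (-(a * x))) x := by
  simpa [mul_comm] using ((hasDerivAt_id x).const_mul a).neg.exp

lemma hasDerivAt_neg_exp_mul_powExpPoly {a : ℝ} (ha : a ≠ 0) (n : ℕ) (x : ℝ) :
    HasDerivAt (fun y => -(exp (-(a * y)) * powExpPoly a n y)) (x ^ n * exp (-(a * x))) x := by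
  induction n generalizing x with
  | zero =>
    refine (((hasDerivAt_exp_neg_mul a x).mul_const a⁻¹).neg.congr_of_eventuallyEq
      (.of_forall fun y => by simp [powExpPoly])).congr_deriv ?_
    field_simp
  | succ n ih =>
    have h := (((hasDerivAt_exp_neg_mul a x).mul (hasDerivAt_pow (n + 1) x)).div_const a).neg.add
      ((ih x).const_mul ((n + 1) / a))
    refine (h.congr_of_eventuallyEq (.of_forall fun y => ?_)).congr_deriv ?_
    · simp only [powExpPoly_succ ha, Pi.add_apply, Pi.neg_apply, Pi.mul_apply, mul_neg]
      ring
    · push_cast; field_simp; ring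

lemma integral_pow_mul_exp_neg_mul {a : ℝ} (ha : a ≠ 0) (n : ℕ) (x : ℝ) :
    ∫ t in (0 : ℝ)..x, t ^ n * exp (-(a * t)) =
      n ! / a ^ (n + 1) - exp (-(a * x)) * powExpPoly a n x := by
  rw [intervalIntegral.integral_eq_sub_of_hasDerivAt
    (fun t _ => hasDerivAt_neg_exp_mul_powExpPoly ha n t)
    ((by fun_prop : Continuous fun t : ℝ => t ^ n * exp (-(a * t))).intervalIntegrable _ _),
    powExpPoly_zero_right]
  simp only [mul_zero, neg_zero, exp_zero, one_mul, sub_neg_eq_add]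
  ring

lemma integral_Ioo_exp_mul_pow_mul_exp (μ ν C : ℝ) (n : ℕ) {x : ℝ} (hx : 0 ≤ x) :
    ∫ t in Set.Ioo 0 x, (exp (-(x - t) / μ) / μ) * (t ^ n * exp (-t / ν) / C) =
      exp (-x / μ) / (μ * C) * ∫ t in (0 : ℝ)..x, t ^ n * exp (-((ν⁻¹ - μ⁻¹) * t)) := by
  rw [← integral_Ioc_eq_integral_Ioo, ← intervalIntegral.integral_of_le hx,
    ← intervalIntegral.integral_const_mul]
  refine intervalIntegral.integral_congr fun t _ => ?_
  have hexp : exp (-(x - t) / μ) * exp (-t / ν) = exp (-x / μ) * exp (-((ν⁻¹ - μ⁻¹) * t)) := by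
    rw [← exp_add, ← exp_add]
    ring_nf
  linear_combination t ^ n / (μ * C) * hexp

lemma hypoexponential_coeff_exp (n : ℕ) {μ ν : ℝ} (hμ : μ ≠ 0) (hν : ν ≠ 0) (hne : μ ≠ ν) :
    1 / (μ * (ν ^ (n + 1) * n !)) * (n ! / (ν⁻¹ - μ⁻¹) ^ (n + 1)) =
      (-1) ^ (n + 1) * μ ^ n / (ν - μ) ^ (n + 1) := by
  have : μ - ν ≠ 0 := sub_ne_zero.2 hne
  rw [inv_sub_inv hν hμ, div_pow, ← neg_sub μ ν, neg_pow (μ - ν)]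
  field_simp
  ring

lemma hypoexponential_coeff_gamma {n j : ℕ} (hj : j ≤ n) {μ ν : ℝ} (hμ : μ ≠ 0) (hν : ν ≠ 0)
    (hne : μ ≠ ν) :
    -(1 / (μ * (ν ^ (n + 1) * n !)) * (n ! / ((n - j)! * (ν⁻¹ - μ⁻¹) ^ (j + 1)))) =
      (-μ) ^ j / ((n - j)! * (ν - μ) ^ (j + 1) * ν ^ (n - j)) := by
  have : μ - ν ≠ 0 := sub_ne_zero.2 hne
  obtain ⟨k, rfl⟩ := Nat.exists_eq_add_of_le hj
  rw [inv_sub_inv hν hμ, div_pow, ← neg_sub μ ν, neg_pow μ, neg_pow (μ - ν),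
    Nat.add_sub_cancel_left]
  field_simp
  ring

/-- The left side is the convolution at `x` of the densities `e^{-s/μ}/μ` of `μX` and
`t^{M-2} e^{-t/ν}/(ν^{M-1} (M-2)!)` of `νY`. -/
theorem stmt7 (M : ℕ) (hM : 2 ≤ M) (μ ν : ℝ) (hμ : 0 < μ) (hν : 0 < ν) (hne : μ ≠ ν)
    (x : ℝ) (hx : 0 < x) :
    ∫ t in Set.Ioo (0:ℝ) x,
        (Real.exp (-(x - t) / μ) / μ) *
          (t ^ (M - 2) * Real.exp (-t / ν) / (ν ^ (M - 1) * ((M - 2).factorial : ℝ))) =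
      (-1 : ℝ) ^ (M - 1) * μ ^ (M - 2) / (ν - μ) ^ (M - 1) * Real.exp (-x / μ)
        + ∑ p ∈ Finset.Icc 1 (M - 1),
            (-μ) ^ (p - 1) / (((M - 1 - p).factorial : ℝ) * (ν - μ) ^ p * ν ^ (M - 1 - p)) *
              x ^ (M - 1 - p) * Real.exp (-x / ν) := by
  obtain ⟨n, rfl⟩ : ∃ n, M = n + 2 := ⟨M - 2, by omega⟩
  have hd : ν⁻¹ - μ⁻¹ ≠ 0 := sub_ne_zero.2 (inv_injective.ne hne.symm)
  have hexp : exp (-x / μ) * exp (-((ν⁻¹ - μ⁻¹) * x)) = exp (-x / ν) := by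
    rw [← exp_add]; ring_nf
  rw [Nat.add_sub_cancel, show n + 2 - 1 = n + 1 from rfl,
    integral_Ioo_exp_mul_pow_mul_exp μ ν _ n hx.le, integral_pow_mul_exp_neg_mul hd, powExpPoly,
    ← Ico_add_one_right_eq_Icc, sum_Ico_eq_sum_range,
    mul_sub, sub_eq_add_neg, mul_sum, mul_sum, ← sum_neg_distrib]
  congr 1
  · rw [div_eq_mul_one_div, mul_assoc, hypoexponential_coeff_exp n hμ.ne' hν.ne' hne]
    ring
  · refine sum_congr rfl fun j hj => ?_
    have hjn : j ≤ n := Nat.lt_succ_iff.1 (mem_range.1 hj)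
    rw [add_tsub_cancel_left, add_comm 1 j, Nat.add_sub_add_right, ← hexp,
      ← hypoexponential_coeff_gamma hjn hμ.ne' hν.ne' hne]
    ring
end

section
/- Let X ~ Exponential(1) and Y ~ Gamma(M−1, 1) be independent with M ≥ 2, and μ, ν > 0 with μ ≠ ν. Then E[log₂(1 + μX + νY)] = log₂(e)·[ ((-μ)^{M-1}/(ν−μ)^{M-1}) e^{1/μ} E₁(1/μ) + ∑_{p=1}^{M-1} ((-μ)^{p-1} ν/(ν−μ)^p) e^{1/ν} ∑_{q=1}^{M-p} E_q(1/ν) ]. -/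
/-!
By Frullani's integral, `log (1 + z) = ∫₀^∞ e^{-t} (1 - e^{-tz}) / t dt` for `z ≥ 0`, so by Fubini
`E[log (1 + μX + νY)] = ∫₀^∞ e^{-t} / t · (1 - E[e^{-t(μX + νY)}]) dt`, and the Laplace transforms
of the exponential and Gamma laws give `E[e^{-t(μX + νY)}] = (1 + μt)⁻¹ (1 + νt)^{-(M-1)}`.
Decomposing this rational function into partial fractions and writing
`1 - b^{-k} = (b - 1) ∑_{q=1}^{k} b^{-q}` turns the integrand into a combination of the functions
`c e^{-t} / (1 + ct)^q`, and the substitution `s = 1 + ct` gives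
`∫₀^∞ c e^{-t} / (1 + ct)^q dt = e^{1/c} E_q(1/c)`.
-/

open Real MeasureTheory Set Filter Topology

section Algebra

variable {K : Type*} [Field K]

theorem one_sub_inv_pow_eq_mul_sum {b : K} (hb : b ≠ 0) (k : ℕ) :
    1 - (b ^ k)⁻¹ = (b - 1) * ∑ q ∈ Finset.Icc 1 k, (b ^ q)⁻¹ := by
  induction k with
  | zero => simp
  | succ k ih =>
    rw [Finset.sum_Icc_succ_top (by omega), mul_add, ← ih, pow_succ]
    field_simp
    ring

theorem inv_mul_pow_eq_add_sum {a b μ ν : K} (ha : a ≠ 0) (hb : b ≠ 0)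
    (hd : ν * a - μ * b ≠ 0) (N : ℕ) :
    (a * b ^ N)⁻¹ = (-μ) ^ N / (ν * a - μ * b) ^ N * a⁻¹ +
      ∑ p ∈ Finset.Icc 1 N, (-μ) ^ (p - 1) * ν / (ν * a - μ * b) ^ p * (b ^ (N + 1 - p))⁻¹ := by
  induction N with
  | zero => simp
  | succ N ih =>
    have hshift : ∀ p ∈ Finset.Icc 1 N, (-μ) ^ (p - 1) * ν / (ν * a - μ * b) ^ p *
        (b ^ (N + 1 + 1 - p))⁻¹ =
        (-μ) ^ (p - 1) * ν / (ν * a - μ * b) ^ p * (b ^ (N + 1 - p))⁻¹ * b⁻¹ := by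
      intro p hp
      rw [show N + 1 + 1 - p = N + 1 - p + 1 by grind, pow_succ, mul_inv, mul_assoc]
    rw [Finset.sum_Icc_succ_top (by omega), Finset.sum_congr rfl hshift, ← Finset.sum_mul,
      pow_succ, ← mul_assoc, mul_inv, ih, Nat.add_sub_cancel_left, Nat.add_sub_cancel]
    field_simp
    ring

theorem one_sub_inv_mul_pow_eq_mul {μ ν t : K} (hμ : 1 + μ * t ≠ 0) (hν : 1 + ν * t ≠ 0)
    (hne : μ ≠ ν) (N : ℕ) :
    1 - ((1 + μ * t) * (1 + ν * t) ^ N)⁻¹ =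
      t * ((-μ) ^ N / (ν - μ) ^ N * (μ / (1 + μ * t)) +
        ∑ p ∈ Finset.Icc 1 N, (-μ) ^ (p - 1) * ν / (ν - μ) ^ p *
          ∑ q ∈ Finset.Icc 1 (N + 1 - p), ν / (1 + ν * t) ^ q) := by
  have hd : ∀ s : K, ν * (1 + μ * s) - μ * (1 + ν * s) = ν - μ := fun s => by ring
  have hne' : ν - μ ≠ 0 := sub_ne_zero.mpr hne.symm
  have at_t := inv_mul_pow_eq_add_sum hμ hν (by rwa [hd]) N
  -- at `t = 0` the decomposition says that the coefficients sum to `1`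
  have at_zero := inv_mul_pow_eq_add_sum (a := (1 : K)) (b := 1) one_ne_zero one_ne_zero
    (by simpa using hne') N
  simp only [hd] at at_t
  simp only [mul_one, one_pow, inv_one] at at_zero
  have hb : ∀ k, 1 - ((1 + ν * t) ^ k)⁻¹ = t * ∑ q ∈ Finset.Icc 1 k, ν / (1 + ν * t) ^ q := by
    intro k
    rw [one_sub_inv_pow_eq_mul_sum hν, add_sub_cancel_left, Finset.mul_sum, Finset.mul_sum]
    exact Finset.sum_congr rfl fun q _ => by ring
  calc 1 - ((1 + μ * t) * (1 + ν * t) ^ N)⁻¹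
      = (-μ) ^ N / (ν - μ) ^ N * (1 - (1 + μ * t)⁻¹) + ∑ p ∈ Finset.Icc 1 N,
          (-μ) ^ (p - 1) * ν / (ν - μ) ^ p * (1 - ((1 + ν * t) ^ (N + 1 - p))⁻¹) := by
        simp only [mul_sub, mul_one, Finset.sum_sub_distrib]
        linear_combination at_zero - at_t
    _ = _ := by
        have ha : 1 - (1 + μ * t)⁻¹ = t * (μ / (1 + μ * t)) := by field_simp; ring
        rw [ha, mul_add, Finset.mul_sum]
        congr 1
        · ring
        · exact Finset.sum_congr rfl fun p _ => by rw [hb]; ring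

end Algebra

/-- The density of the Gamma distribution with shape `n + 1` and rate `1`, on `y > 0`. -/
noncomputable def erlangPDF (n : ℕ) (y : ℝ) : ℝ :=
  y ^ n * exp (-y) / n.factorial

@[fun_prop]
theorem measurable_erlangPDF (n : ℕ) : Measurable (erlangPDF n) := by
  unfold erlangPDF; fun_prop

theorem erlangPDF_nonneg (n : ℕ) {y : ℝ} (hy : 0 ≤ y) : 0 ≤ erlangPDF n y := by
  unfold erlangPDF; positivity

theorem erlangPDF_zero (y : ℝ) : erlangPDF 0 y = exp (-y) := by
  simp [erlangPDF]

theorem mul_erlangPDF (n : ℕ) (y : ℝ) : y * erlangPDF n y = (n + 1) * erlangPDF (n + 1) y := by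
  unfold erlangPDF
  push_cast [Nat.factorial_succ]
  field_simp
  ring

theorem exp_neg_mul_mul_erlangPDF (n : ℕ) (s y : ℝ) :
    exp (-(s * y)) * erlangPDF n y = (y ^ n * exp (-((1 + s) * y))) / n.factorial := by
  rw [erlangPDF, show -((1 + s) * y) = -(s * y) + -y by ring, exp_add]
  ring

theorem integrableOn_pow_mul_exp_neg_mul (n : ℕ) {r : ℝ} (hr : 0 < r) :
    IntegrableOn (fun y => y ^ n * exp (-(r * y))) (Ioi 0) := by
  refine (integrableOn_rpow_mul_exp_neg_mul_rpow (s := n) (p := 1)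
    (by linarith [n.cast_nonneg (α := ℝ)]) one_pos hr).congr_fun (fun y _ => ?_) measurableSet_Ioi
  simp [rpow_natCast]

theorem integral_pow_mul_exp_neg_mul_s8 (n : ℕ) {r : ℝ} (hr : 0 < r) :
    ∫ y in Ioi 0, y ^ n * exp (-(r * y)) = n.factorial / r ^ (n + 1) := by
  have h := integral_rpow_mul_exp_neg_mul_Ioi (a := n + 1) (by positivity) hr
  rw [add_sub_cancel_right, Gamma_nat_eq_factorial, ← Nat.cast_succ, rpow_natCast] at h
  simp only [rpow_natCast] at h
  rw [h, Nat.succ_eq_add_one, div_pow, one_pow, div_mul_eq_mul_div, one_mul]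

theorem integrableOn_exp_neg_mul_mul_erlangPDF (n : ℕ) {s : ℝ} (hs : -1 < s) :
    IntegrableOn (fun y => exp (-(s * y)) * erlangPDF n y) (Ioi 0) := by
  simp only [exp_neg_mul_mul_erlangPDF]
  exact (integrableOn_pow_mul_exp_neg_mul n (by linarith)).div_const _

theorem integral_exp_neg_mul_mul_erlangPDF (n : ℕ) {s : ℝ} (hs : -1 < s) :
    ∫ y in Ioi 0, exp (-(s * y)) * erlangPDF n y = ((1 + s) ^ (n + 1))⁻¹ := by
  simp only [exp_neg_mul_mul_erlangPDF]
  rw [integral_div, integral_pow_mul_exp_neg_mul_s8 n (by linarith)]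
  field_simp

theorem norm_exp_neg_div_mul_one_sub_exp_neg_le {t z : ℝ} (ht : 0 < t) (hz : 0 ≤ z) :
    ‖exp (-t) / t * (1 - exp (-(t * z)))‖ ≤ z * exp (-t) := by
  have h1 : exp (-(t * z)) ≤ 1 := exp_le_one_iff.mpr (by nlinarith)
  have h2 : 1 - exp (-(t * z)) ≤ t * z := by linarith [add_one_le_exp (-(t * z))]
  rw [norm_of_nonneg (by have := exp_pos (-t); positivity)]
  calc exp (-t) / t * (1 - exp (-(t * z))) ≤ exp (-t) / t * (t * z) := by gcongr
    _ = z * exp (-t) := by field_simp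

theorem integrableOn_exp_neg_div_mul_one_sub_exp_neg {z : ℝ} (hz : 0 ≤ z) :
    IntegrableOn (fun t => exp (-t) / t * (1 - exp (-(t * z)))) (Ioi 0) := by
  refine ((integrableOn_exp_neg_Ioi 0).const_mul z).mono'
    (by fun_prop : Measurable _).aestronglyMeasurable ?_
  filter_upwards [ae_restrict_mem measurableSet_Ioi] with t ht
  exact norm_exp_neg_div_mul_one_sub_exp_neg_le ht hz

theorem log_one_add_eq_integral {z : ℝ} (hz : 0 ≤ z) :
    log (1 + z) = ∫ t in Ioi 0, exp (-t) / t * (1 - exp (-(t * z))) := by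
  have hcont : Continuous fun x : ℝ => exp (-x) := by fun_prop
  have hzero : Tendsto (fun x : ℝ => exp (-x)) (𝓝[>] 0) (𝓝 1) := by
    simpa using hcont.continuousWithinAt.tendsto (s := Ioi 0) (x := 0)
  have hsplit : ∀ t : ℝ, t⁻¹ • (exp (-(1 * t)) - exp (-((1 + z) * t))) =
      exp (-t) / t * (1 - exp (-(t * z))) := fun t => by
    rw [one_mul, show -((1 + z) * t) = -t + -(t * z) by ring, exp_add, smul_eq_mul]
    ring
  have hfrullani := Frullani.integral_Ioi_eq (hcont.locallyIntegrable.locallyIntegrableOn _)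
    one_pos (by linarith : 0 < 1 + z) hzero tendsto_exp_neg_atTop_nhds_zero
    (by simpa only [hsplit] using integrableOn_exp_neg_div_mul_one_sub_exp_neg hz)
  simpa only [hsplit, div_one, sub_zero, smul_eq_mul, mul_one] using hfrullani.symm

theorem integral_log_one_add_mul_eq {α : Type*} [MeasurableSpace α] {m : Measure α} [SFinite m]
    {f w : α → ℝ} (hf : Measurable f) (hw : Measurable w) (hf0 : ∀ᵐ a ∂m, 0 ≤ f a)
    (hw0 : ∀ᵐ a ∂m, 0 ≤ w a) (hfw : Integrable (fun a => f a * w a) m) :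
    ∫ a, log (1 + f a) * w a ∂m =
      ∫ t in Ioi (0 : ℝ), exp (-t) / t * ∫ a, (1 - exp (-(t * f a))) * w a ∂m := by
  have hint : Integrable
      (Function.uncurry fun a (t : ℝ) => exp (-t) / t * (1 - exp (-(t * f a))) * w a)
      (m.prod (volume.restrict (Ioi 0))) := by
    refine (hfw.mul_prod (integrableOn_exp_neg_Ioi 0)).mono'
      (by fun_prop : Measurable _).aestronglyMeasurable ?_
    filter_upwards [Measure.quasiMeasurePreserving_fst.ae (hf0.and hw0),
      Measure.quasiMeasurePreserving_snd.ae (ae_restrict_mem measurableSet_Ioi)]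
      with ⟨a, t⟩ ⟨hfa, hwa⟩ (ht : 0 < t)
    rw [Function.uncurry_apply_pair, norm_mul, norm_of_nonneg hwa]
    calc _ ≤ f a * exp (-t) * w a :=
          mul_le_mul_of_nonneg_right (norm_exp_neg_div_mul_one_sub_exp_neg_le ht hfa) hwa
      _ = _ := mul_right_comm _ _ _
  calc ∫ a, log (1 + f a) * w a ∂m
      = ∫ a, (∫ t in Ioi (0 : ℝ), exp (-t) / t * (1 - exp (-(t * f a))) * w a) ∂m := by
        refine integral_congr_ae (hf0.mono fun a hfa => ?_)
        simp only [integral_mul_const, ← log_one_add_eq_integral hfa]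
    _ = ∫ t in Ioi (0 : ℝ), ∫ a, exp (-t) / t * (1 - exp (-(t * f a))) * w a ∂m :=
        integral_integral_swap hint
    _ = _ := by simp only [mul_assoc, integral_const_mul]

theorem integral_log_one_add_mul_exp_neg_mul_erlangPDF {μ ν : ℝ} (hμ : 0 ≤ μ) (hν : 0 ≤ ν)
    (n : ℕ) :
    ∫ x in Ioi (0 : ℝ), ∫ y in Ioi (0 : ℝ), log (1 + μ * x + ν * y) * exp (-x) * erlangPDF n y =
      ∫ t in Ioi (0 : ℝ), exp (-t) / t * (1 - ((1 + μ * t) * (1 + ν * t) ^ (n + 1))⁻¹) := by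
  set ρ := (volume.restrict (Ioi (0 : ℝ))).prod (volume.restrict (Ioi (0 : ℝ)))
  set f : ℝ × ℝ → ℝ := fun p => μ * p.1 + ν * p.2 with hf
  set w : ℝ × ℝ → ℝ := fun p => exp (-p.1) * erlangPDF n p.2 with hw
  set g : ℝ → ℕ → ℝ → ℝ := fun s k y => exp (-(s * y)) * erlangPDF k y with hg
  have hpos : ∀ᵐ p ∂ρ, 0 < p.1 ∧ 0 < p.2 :=
    (Measure.quasiMeasurePreserving_fst.ae (ae_restrict_mem measurableSet_Ioi)).and
      (Measure.quasiMeasurePreserving_snd.ae (ae_restrict_mem measurableSet_Ioi))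
  have hf0 : ∀ᵐ p ∂ρ, 0 ≤ f p := hpos.mono fun p hp => by
    have := hp.1.le; have := hp.2.le; positivity
  have hw0 : ∀ᵐ p ∂ρ, 0 ≤ w p := hpos.mono fun p hp =>
    mul_nonneg (exp_pos _).le (erlangPDF_nonneg n hp.2.le)
  have hg_int : ∀ {s : ℝ}, -1 < s → ∀ k, IntegrableOn (g s k) (Ioi 0) :=
    fun hs k => integrableOn_exp_neg_mul_mul_erlangPDF k hs
  have hg_eq : ∀ {s : ℝ}, -1 < s → ∀ k, ∫ y in Ioi 0, g s k y = ((1 + s) ^ (k + 1))⁻¹ :=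
    fun hs k => integral_exp_neg_mul_mul_erlangPDF k hs
  have hfw : Integrable (fun p => f p * w p) ρ := by
    have hx : IntegrableOn (fun x : ℝ => x * exp (-x)) (Ioi 0) := by
      simpa using integrableOn_pow_mul_exp_neg_mul 1 one_pos
    have hy : IntegrableOn (fun y => y * erlangPDF n y) (Ioi 0) :=
      IntegrableOn.congr_fun ((hg_int neg_one_lt_zero (n + 1)).const_mul ((n : ℝ) + 1))
        (fun y _ => by simp [hg, mul_erlangPDF]) measurableSet_Ioi
    have hen : IntegrableOn (erlangPDF n) (Ioi 0) := by simpa [hg] using hg_int neg_one_lt_zero n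
    refine (((hx.mul_prod hen).const_mul μ).add
      (((integrableOn_exp_neg_Ioi 0).mul_prod hy).const_mul ν)).congr (ae_of_all _ fun p => ?_)
    simp only [hf, hw, Pi.add_apply]
    ring
  have hlog : Integrable (fun p => log (1 + f p) * w p) ρ := by
    refine hfw.mono' (by fun_prop : Measurable _).aestronglyMeasurable ?_
    filter_upwards [hf0, hw0] with p hfp hwp
    rw [norm_mul, norm_of_nonneg hwp, norm_of_nonneg (log_nonneg (by linarith))]
    gcongr
    linarith [log_le_sub_one_of_pos (by linarith : 0 < 1 + f p)]
  calc ∫ x in Ioi (0 : ℝ), ∫ y in Ioi (0 : ℝ), log (1 + μ * x + ν * y) * exp (-x) * erlangPDF n y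
      = ∫ p, log (1 + f p) * w p ∂ρ := by
        rw [integral_prod _ hlog]
        simp only [hf, hw, add_assoc, mul_assoc]
    _ = ∫ t in Ioi (0 : ℝ), exp (-t) / t * ∫ p, (1 - exp (-(t * f p))) * w p ∂ρ :=
        integral_log_one_add_mul_eq (by fun_prop) (by fun_prop) hf0 hw0 hfw
    _ = _ := by
        refine setIntegral_congr_fun measurableSet_Ioi fun t (ht : 0 < t) => ?_
        have hsplit : ∀ p : ℝ × ℝ, (1 - exp (-(t * f p))) * w p =
            g 0 0 p.1 * g 0 n p.2 - g (t * μ) 0 p.1 * g (t * ν) n p.2 := by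
          intro p
          have hexp : exp (-(t * f p)) = exp (-(t * μ * p.1)) * exp (-(t * ν * p.2)) := by
            rw [← exp_add, hf]; ring_nf
          simp only [hg, hw, hexp, erlangPDF_zero, zero_mul, neg_zero, exp_zero, one_mul]
          ring
        have hμt : -1 < t * μ := by nlinarith
        have hνt : -1 < t * ν := by nlinarith
        simp only [hsplit]
        rw [integral_sub ((hg_int neg_one_lt_zero 0).mul_prod (hg_int neg_one_lt_zero n))
          ((hg_int hμt 0).mul_prod (hg_int hνt n)), integral_prod_mul, integral_prod_mul,
          hg_eq neg_one_lt_zero, hg_eq neg_one_lt_zero, hg_eq hμt, hg_eq hνt]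
        simp [mul_comm t, mul_comm (1 + μ * t)⁻¹]

theorem integrableOn_mul_exp_neg_div_one_add_mul_pow {c : ℝ} (hc : 0 ≤ c) (q : ℕ) :
    IntegrableOn (fun t => c * exp (-t) / (1 + c * t) ^ q) (Ioi 0) := by
  refine ((integrableOn_exp_neg_Ioi 0).const_mul c).mono'
    (by fun_prop : Measurable _).aestronglyMeasurable ?_
  filter_upwards [ae_restrict_mem measurableSet_Ioi] with t (ht : 0 < t)
  rw [norm_of_nonneg (by positivity)]
  exact div_le_self (by positivity) (one_le_pow₀ (by nlinarith))

theorem integral_mul_exp_neg_div_one_add_mul_pow {c : ℝ} (hc : 0 < c) (q : ℕ) :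
    ∫ t in Ioi 0, c * exp (-t) / (1 + c * t) ^ q = exp (1 / c) * genExpInt q (1 / c) := by
  have himage : (fun t => 1 + c * t) '' Ioi 0 = Ioi 1 := by
    rw [show (fun t => 1 + c * t) = (1 + ·) ∘ (c * ·) from rfl, image_comp,
      image_mul_left_Ioi hc, image_const_add_Ioi, mul_zero, add_zero]
  rw [genExpInt, ← himage, integral_image_eq_integral_abs_deriv_smul (f' := fun _ => c)
    measurableSet_Ioi
    (fun t _ => by simpa using (((hasDerivAt_id t).const_mul c).const_add 1).hasDerivWithinAt)
    (fun s _ t _ h => by simpa [hc.ne'] using h), ← integral_const_mul]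
  refine setIntegral_congr_fun measurableSet_Ioi fun t _ => ?_
  have hexp : exp (1 / c) * exp (-(1 / c) * (1 + c * t)) = exp (-t) := by
    rw [← exp_add]; congr 1; field_simp; ring
  simp only [abs_of_pos hc, smul_eq_mul]
  rw [← hexp]
  ring

theorem integral_exp_neg_div_mul_one_sub_inv_mul_pow {μ ν : ℝ} (hμ : 0 < μ) (hν : 0 < ν)
    (hne : μ ≠ ν) (N : ℕ) :
    ∫ t in Ioi (0 : ℝ), exp (-t) / t * (1 - ((1 + μ * t) * (1 + ν * t) ^ N)⁻¹) =
      (-μ) ^ N / (ν - μ) ^ N * exp (1 / μ) * genExpInt 1 (1 / μ) +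
        ∑ p ∈ Finset.Icc 1 N, (-μ) ^ (p - 1) * ν / (ν - μ) ^ p * exp (1 / ν) *
          ∑ q ∈ Finset.Icc 1 (N + 1 - p), genExpInt q (1 / ν) := by
  have hpointwise : ∀ t ∈ Ioi (0 : ℝ),
      exp (-t) / t * (1 - ((1 + μ * t) * (1 + ν * t) ^ N)⁻¹) =
        (-μ) ^ N / (ν - μ) ^ N * (μ * exp (-t) / (1 + μ * t)) +
          ∑ p ∈ Finset.Icc 1 N, (-μ) ^ (p - 1) * ν / (ν - μ) ^ p *
            ∑ q ∈ Finset.Icc 1 (N + 1 - p), ν * exp (-t) / (1 + ν * t) ^ q := by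
    intro t (ht : 0 < t)
    rw [one_sub_inv_mul_pow_eq_mul (by positivity) (by positivity) hne, ← mul_assoc,
      div_mul_cancel₀ _ ht.ne', mul_add, Finset.mul_sum]
    congr 1
    · ring
    · refine Finset.sum_congr rfl fun p _ => ?_
      rw [mul_left_comm, Finset.mul_sum]
      congr 1
      exact Finset.sum_congr rfl fun q _ => by ring
  have hint : ∀ {c : ℝ}, 0 < c → ∀ q,
      IntegrableOn (fun t => c * exp (-t) / (1 + c * t) ^ q) (Ioi 0) :=
    fun hc q => integrableOn_mul_exp_neg_div_one_add_mul_pow hc.le q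
  have hint_sum : ∀ p, IntegrableOn (fun t => ∑ q ∈ Finset.Icc 1 (N + 1 - p),
      ν * exp (-t) / (1 + ν * t) ^ q) (Ioi 0) :=
    fun p => integrable_finsetSum _ fun q _ => hint hν q
  have hint1 : IntegrableOn (fun t => μ * exp (-t) / (1 + μ * t)) (Ioi 0) := by
    simpa using hint hμ 1
  have hE1 := integral_mul_exp_neg_div_one_add_mul_pow hμ 1
  simp only [pow_one] at hE1
  rw [setIntegral_congr_fun measurableSet_Ioi hpointwise,
    integral_add (hint1.const_mul _)
      (integrable_finsetSum _ fun p _ => (hint_sum p).const_mul _),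
    integral_const_mul, hE1,
    integral_finsetSum _ fun p _ => (hint_sum p).const_mul _]
  congr 1
  · ring
  · refine Finset.sum_congr rfl fun p _ => ?_
    rw [integral_const_mul, integral_finsetSum _ fun q _ => hint hν q]
    simp only [integral_mul_exp_neg_div_one_add_mul_pow hν, ← Finset.mul_sum]
    ring

/-- `E[log₂(1 + μX + νY)]` for independent `X ~ Exponential(1)` and `Y ~ Gamma(M-1,1)`,
written as a double integral against their densities. -/
theorem stmt8 (M : ℕ) (hM : 2 ≤ M) (μ ν : ℝ) (hμ : 0 < μ) (hν : 0 < ν) (hne : μ ≠ ν) :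
    (∫ x in Set.Ioi (0:ℝ), ∫ y in Set.Ioi (0:ℝ),
        Real.logb 2 (1 + μ * x + ν * y) * Real.exp (-x) *
          (y ^ (M - 2) * Real.exp (-y) / ((M - 2).factorial : ℝ))) =
      Real.logb 2 (Real.exp 1) *
        ((-μ) ^ (M - 1) / (ν - μ) ^ (M - 1) * Real.exp (1 / μ) * genExpInt 1 (1 / μ)
          + ∑ p ∈ Finset.Icc 1 (M - 1),
              (-μ) ^ (p - 1) * ν / (ν - μ) ^ p * Real.exp (1 / ν) *
                ∑ q ∈ Finset.Icc 1 (M - p), genExpInt q (1 / ν)) := by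
  have hlog := integral_log_one_add_mul_exp_neg_mul_erlangPDF hμ.le hν.le (M - 2)
  rw [show M - 2 + 1 = M - 1 by omega, integral_exp_neg_div_mul_one_sub_inv_mul_pow hμ hν hne,
    Nat.sub_add_cancel (by omega : 1 ≤ M)] at hlog
  simp only [erlangPDF] at hlog
  rw [← hlog, ← integral_const_mul]
  refine setIntegral_congr_fun measurableSet_Ioi fun x _ => ?_
  rw [← integral_const_mul]
  refine setIntegral_congr_fun measurableSet_Ioi fun y _ => ?_
  rw [logb, logb, log_exp]
  ring
end

section
/- Let Y ~ Gamma(M−1, 1) with M ≥ 2 and c > 0. Then E[log₂(1 + cY)] = log₂(e)·e^{1/c}·∑_{q=1}^{M-1} E_q(1/c), where E_q is the generalized exponential integral. -/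
/-!
Write `m = M - 2`, `L m = ∫ log (1 + c y) yᵐ e^{-y}`, `J k = ∫ yᵏ e^{-y} / (1 + c y)` and
`B q = ∫ e^{-y} / (1 + c y)^q` over `(0, ∞)`. Integrating `L m` by parts against `yᵐ e^{-y}` gives
`L m = m L (m - 1) + c J m`. The elementary identity `c J (k + 1) + J k = k!` together with the
integration by parts `B (q + 1) + (q + 1) c B (q + 2) = 1` yields `J k = k! B (k + 1)`, so
`L m / m! = ∑_{q=1}^{m+1} c B q`. Finally the substitution `t = 1 + c y` turns `c B q` into
`e^{1/c} E_q(1/c)`.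
-/

open Real MeasureTheory Set Filter Topology

theorem integral_Ioi_eq_add_of_hasDerivAt {F f g : ℝ → ℝ} {a : ℝ}
    (hcont : ContinuousWithinAt F (Ici a) a) (hderiv : ∀ y ∈ Ioi a, HasDerivAt F (f y - g y) y)
    (hf : IntegrableOn f (Ioi a)) (hg : IntegrableOn g (Ioi a)) (hF : Tendsto F atTop (𝓝 0)) :
    ∫ y in Ioi a, g y = F a + ∫ y in Ioi a, f y := by
  have h := integral_Ioi_of_hasDerivAt_of_tendsto hcont hderiv (hf.sub hg) hF
  rw [integral_sub hf hg] at h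
  linarith

theorem integral_pow_mul_exp_neg_Ioi (k : ℕ) :
    ∫ y in Ioi (0:ℝ), y ^ k * exp (-y) = k.factorial := by
  rw [← Real.Gamma_nat_eq_factorial, Real.Gamma_eq_integral (by positivity)]
  refine setIntegral_congr_fun measurableSet_Ioi fun y _ => ?_
  rw [add_sub_cancel_right, Real.rpow_natCast, mul_comm]

theorem integrableOn_pow_mul_exp_neg_Ioi (k : ℕ) :
    IntegrableOn (fun y : ℝ => y ^ k * exp (-y)) (Ioi 0) := by
  refine (Real.GammaIntegral_convergent (s := k + 1) (by positivity)).congr_fun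
    (fun y _ => ?_) measurableSet_Ioi
  simp only [add_sub_cancel_right, Real.rpow_natCast, mul_comm]

namespace GammaLogMoment

variable (c : ℝ)

noncomputable def logMoment (m : ℕ) : ℝ :=
  ∫ y in Ioi (0:ℝ), log (1 + c * y) * (y ^ m * exp (-y))

noncomputable def invMoment (k : ℕ) : ℝ :=
  ∫ y in Ioi (0:ℝ), y ^ k * exp (-y) / (1 + c * y)

noncomputable def expInvPowIntegral (q : ℕ) : ℝ :=
  ∫ y in Ioi (0:ℝ), exp (-y) / (1 + c * y) ^ q

variable {c}

theorem one_add_mul_pos (hc : 0 ≤ c) {y : ℝ} (hy : 0 ≤ y) : 0 < 1 + c * y := by positivity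

theorem one_le_one_add_mul (hc : 0 ≤ c) {y : ℝ} (hy : 0 ≤ y) : 1 ≤ 1 + c * y :=
  le_add_of_nonneg_right (mul_nonneg hc hy)

theorem integrableOn_invMoment (hc : 0 ≤ c) (k : ℕ) :
    IntegrableOn (fun y => y ^ k * exp (-y) / (1 + c * y)) (Ioi 0) := by
  refine (integrableOn_pow_mul_exp_neg_Ioi k).mono'
    (ContinuousOn.aestronglyMeasurable ?_ measurableSet_Ioi)
    (ae_restrict_of_forall_mem measurableSet_Ioi fun y (hy : 0 < y) => ?_)
  · exact ContinuousOn.div (by fun_prop) (by fun_prop) fun y (hy : 0 < y) =>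
      (one_add_mul_pos hc hy.le).ne'
  · rw [norm_of_nonneg (by have := one_add_mul_pos hc hy.le; positivity)]
    exact div_le_self (by positivity) (one_le_one_add_mul hc hy.le)

theorem integrableOn_expInvPowIntegral (hc : 0 ≤ c) (q : ℕ) :
    IntegrableOn (fun y => exp (-y) / (1 + c * y) ^ q) (Ioi 0) := by
  refine (integrableOn_exp_neg_Ioi 0).mono'
    (ContinuousOn.aestronglyMeasurable ?_ measurableSet_Ioi)
    (ae_restrict_of_forall_mem measurableSet_Ioi fun y (hy : 0 < y) => ?_)
  · exact ContinuousOn.div (by fun_prop) (by fun_prop) fun y (hy : 0 < y) =>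
      pow_ne_zero _ (one_add_mul_pos hc hy.le).ne'
  · rw [norm_of_nonneg (by have := one_add_mul_pos hc hy.le; positivity)]
    exact div_le_self (by positivity) (one_le_pow₀ (one_le_one_add_mul hc hy.le))

theorem log_one_add_mul_le (hc : 0 ≤ c) {y : ℝ} (hy : 0 ≤ y) : log (1 + c * y) ≤ c * y := by
  linarith [log_le_sub_one_of_pos (one_add_mul_pos hc hy)]

theorem integrableOn_logMoment (hc : 0 ≤ c) (m : ℕ) :
    IntegrableOn (fun y => log (1 + c * y) * (y ^ m * exp (-y))) (Ioi 0) := by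
  refine ((integrableOn_pow_mul_exp_neg_Ioi (m + 1)).const_mul c).mono'
    (ContinuousOn.aestronglyMeasurable ?_ measurableSet_Ioi)
    (ae_restrict_of_forall_mem measurableSet_Ioi fun y (hy : 0 < y) => ?_)
  · exact ContinuousOn.mul (ContinuousOn.log (by fun_prop) fun y (hy : 0 < y) =>
      (one_add_mul_pos hc hy.le).ne') (by fun_prop)
  · rw [norm_of_nonneg (mul_nonneg (log_nonneg (one_le_one_add_mul hc hy.le)) (by positivity))]
    calc log (1 + c * y) * (y ^ m * exp (-y)) ≤ c * y * (y ^ m * exp (-y)) := by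
          gcongr; exact log_one_add_mul_le hc hy.le
      _ = c * (y ^ (m + 1) * exp (-y)) := by ring

theorem mul_invMoment_succ_add_invMoment (hc : 0 ≤ c) (k : ℕ) :
    c * invMoment c (k + 1) + invMoment c k = k.factorial := by
  rw [invMoment, invMoment, ← integral_const_mul, ← integral_add
    ((integrableOn_invMoment hc (k + 1)).const_mul c) (integrableOn_invMoment hc k),
    ← integral_pow_mul_exp_neg_Ioi k]
  refine setIntegral_congr_fun measurableSet_Ioi fun y (hy : 0 < y) => ?_
  have := one_add_mul_pos hc hy.le
  field_simp
  ring

theorem expInvPowIntegral_succ (hc : 0 ≤ c) (r : ℕ) :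
    expInvPowIntegral c (r + 1) = 1 - (r + 1) * c * expInvPowIntegral c (r + 2) := by
  have hderiv : ∀ y ∈ Ioi (0:ℝ), HasDerivAt (fun y => exp (-y) / (1 + c * y) ^ (r + 1))
      (-((r + 1) * c * (exp (-y) / (1 + c * y) ^ (r + 2))) - exp (-y) / (1 + c * y) ^ (r + 1))
      y := by
    intro y (hy : 0 < y)
    have hu := one_add_mul_pos hc hy.le
    have hexp : HasDerivAt (fun y => exp (-y)) (-exp (-y)) y := by
      simpa using (hasDerivAt_neg y).exp
    have hpow :
        HasDerivAt (fun y => (1 + c * y) ^ (r + 1)) ((r + 1 : ℕ) * (1 + c * y) ^ r * c) y := by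
      simpa using (((hasDerivAt_id y).const_mul c).const_add 1).fun_pow (r + 1)
    refine (hexp.div hpow (pow_ne_zero _ hu.ne')).congr_deriv ?_
    field_simp
    push_cast
    ring
  have hcont : ContinuousWithinAt (fun y => exp (-y) / (1 + c * y) ^ (r + 1)) (Ici 0) 0 :=
    (ContinuousOn.div (by fun_prop) (by fun_prop) fun y (hy : 0 ≤ y) =>
      pow_ne_zero _ (one_add_mul_pos hc hy).ne').continuousWithinAt self_mem_Ici
  have hlim : Tendsto (fun y => exp (-y) / (1 + c * y) ^ (r + 1)) atTop (𝓝 0) := by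
    refine squeeze_zero' ?_ ?_ tendsto_exp_neg_atTop_nhds_zero <;>
      filter_upwards [eventually_ge_atTop 0] with y hy
    · have := one_add_mul_pos hc hy; positivity
    · exact div_le_self (exp_nonneg _) (one_le_pow₀ (one_le_one_add_mul hc hy))
  rw [expInvPowIntegral, expInvPowIntegral, integral_Ioi_eq_add_of_hasDerivAt hcont hderiv
    ((integrableOn_expInvPowIntegral hc (r + 2)).const_mul _).neg
    (integrableOn_expInvPowIntegral hc (r + 1)) hlim, integral_neg, integral_const_mul]
  simp [sub_eq_add_neg]

theorem invMoment_eq_factorial_mul (hc : 0 ≤ c) (k : ℕ) :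
    invMoment c k = k.factorial * expInvPowIntegral c (k + 1) := by
  induction k with
  | zero => simp [invMoment, expInvPowIntegral]
  | succ k ih =>
    rcases hc.eq_or_lt with rfl | hc
    · simp [invMoment, expInvPowIntegral, integral_pow_mul_exp_neg_Ioi, integral_exp_Iic_zero]
    · have h := mul_invMoment_succ_add_invMoment hc.le k
      rw [ih, expInvPowIntegral_succ hc.le k] at h
      refine mul_left_cancel₀ hc.ne' ?_
      push_cast [Nat.factorial_succ]
      linear_combination h

-- For `m = 0` the truncated `m - 1` is harmless: its coefficient is `0`.
theorem logMoment_eq_mul_pred_add (hc : 0 ≤ c) (m : ℕ) :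
    logMoment c m = m * logMoment c (m - 1) + c * invMoment c m := by
  have hderiv : ∀ y ∈ Ioi (0:ℝ), HasDerivAt (fun y => log (1 + c * y) * (y ^ m * exp (-y)))
      ((c * (y ^ m * exp (-y) / (1 + c * y)) + m * (log (1 + c * y) * (y ^ (m - 1) * exp (-y))))
        - log (1 + c * y) * (y ^ m * exp (-y))) y := by
    intro y (hy : 0 < y)
    have hlog : HasDerivAt (fun y => log (1 + c * y)) (c / (1 + c * y)) y := by
      simpa using (((hasDerivAt_id y).const_mul c).const_add 1).log
        (one_add_mul_pos hc hy.le).ne'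
    have hexp : HasDerivAt (fun y => exp (-y)) (-exp (-y)) y := by
      simpa using (hasDerivAt_neg y).exp
    refine (hlog.fun_mul ((hasDerivAt_pow m y).fun_mul hexp)).congr_deriv ?_
    ring
  have hcont : ContinuousWithinAt (fun y => log (1 + c * y) * (y ^ m * exp (-y))) (Ici 0) 0 :=
    (ContinuousOn.mul (ContinuousOn.log (by fun_prop) fun y (hy : 0 ≤ y) =>
      (one_add_mul_pos hc hy).ne') (by fun_prop)).continuousWithinAt self_mem_Ici
  have hlim : Tendsto (fun y => log (1 + c * y) * (y ^ m * exp (-y))) atTop (𝓝 0) := by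
    refine squeeze_zero' (g := fun y => c * (y ^ (m + 1) * exp (-y))) ?_ ?_
      (by simpa using (tendsto_pow_mul_exp_neg_atTop_nhds_zero (m + 1)).const_mul c) <;>
      filter_upwards [eventually_ge_atTop 0] with y hy
    · have := log_nonneg (one_le_one_add_mul hc hy); positivity
    · calc log (1 + c * y) * (y ^ m * exp (-y)) ≤ c * y * (y ^ m * exp (-y)) := by
            gcongr; exact log_one_add_mul_le hc hy
        _ = c * (y ^ (m + 1) * exp (-y)) := by ring
  rw [logMoment, logMoment, invMoment, integral_Ioi_eq_add_of_hasDerivAt hcont hderiv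
    (((integrableOn_invMoment hc m).const_mul c).add
      ((integrableOn_logMoment hc (m - 1)).const_mul _))
    (integrableOn_logMoment hc m) hlim, integral_add ((integrableOn_invMoment hc m).const_mul c)
      ((integrableOn_logMoment hc (m - 1)).const_mul _), integral_const_mul, integral_const_mul]
  simp only [log_one, mul_zero, zero_mul, zero_add, add_comm]

theorem logMoment_eq_factorial_mul_sum (hc : 0 ≤ c) (m : ℕ) :
    logMoment c m = m.factorial * ∑ q ∈ Finset.Icc 1 (m + 1), c * expInvPowIntegral c q := by
  induction m with
  | zero =>
    rw [logMoment_eq_mul_pred_add hc 0, invMoment_eq_factorial_mul hc 0]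
    simp
  | succ m ih =>
    rw [logMoment_eq_mul_pred_add hc, Nat.add_sub_cancel, ih, invMoment_eq_factorial_mul hc,
      Finset.sum_Icc_succ_top (by omega : 1 ≤ m + 2)]
    push_cast [Nat.factorial_succ]
    ring

theorem exp_mul_genExpInt (hc : 0 < c) (q : ℕ) :
    exp (1 / c) * genExpInt q (1 / c) = c * expInvPowIntegral c q := by
  have hshift :
      genExpInt q (1 / c) = ∫ s in Ioi (0:ℝ), exp (-(1 / c) * (s + 1)) / (s + 1) ^ q := by
    have h := (measurePreserving_add_right volume (1:ℝ)).setIntegral_preimage_emb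
      (MeasurableEquiv.addRight (1:ℝ)).measurableEmbedding
      (fun t => exp (-(1 / c) * t) / t ^ q) (Ioi 1)
    simp only [preimage_add_const_Ioi, sub_self] at h
    rw [genExpInt, ← h]
  have hscale :=
    integral_comp_mul_left_Ioi' (fun s => exp (-(1 / c) * (s + 1)) / (s + 1) ^ q) 0 hc
  rw [mul_zero, smul_eq_mul] at hscale
  rw [hshift, ← hscale, mul_left_comm, expInvPowIntegral, ← integral_const_mul]
  congr 1
  refine setIntegral_congr_fun measurableSet_Ioi fun y _ => ?_
  rw [add_comm (c * y), mul_div_assoc', ← exp_add]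
  congr 2
  field_simp
  ring

end GammaLogMoment

/-- `E[log₂(1 + cY)]` for `Y ~ Gamma(M-1,1)`, written as an integral against its density. -/
theorem stmt9 (M : ℕ) (hM : 2 ≤ M) (c : ℝ) (hc : 0 < c) :
    ∫ y in Set.Ioi (0:ℝ),
        Real.logb 2 (1 + c * y) * (y ^ (M - 2) * Real.exp (-y) / ((M - 2).factorial : ℝ)) =
      Real.logb 2 (Real.exp 1) * Real.exp (1 / c) *
        ∑ q ∈ Finset.Icc 1 (M - 1), genExpInt q (1 / c) := by
  obtain ⟨m, rfl⟩ : ∃ m, M = m + 2 := ⟨M - 2, by omega⟩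
  have hdensity : ∫ y in Ioi (0:ℝ), logb 2 (1 + c * y) * (y ^ m * exp (-y) / m.factorial)
      = GammaLogMoment.logMoment c m / (log 2 * m.factorial) := by
    rw [GammaLogMoment.logMoment, ← integral_div]
    refine setIntegral_congr_fun measurableSet_Ioi fun y _ => ?_
    rw [logb]
    field_simp
  rw [Nat.add_sub_cancel, show m + 2 - 1 = m + 1 by omega, hdensity,
    GammaLogMoment.logMoment_eq_factorial_mul_sum hc.le]
  simp_rw [← GammaLogMoment.exp_mul_genExpInt hc]
  rw [← Finset.mul_sum, logb, log_exp]
  field_simp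
end

section
/- Let θ ∈ [0, π/2] be a random angle with E[sin²θ] = 2^B · B(2^B, M/(M−1)) where B(·,·) is the Beta function, B a nonnegative integer, M ≥ 2. Then 2^B·B(2^B, M/(M−1)) ≤ 2^{−B/(M−1)}·Γ(M/(M−1))·(M/(M−1)) = Γ((2M−1)/(M−1))·2^{−B/(M−1)}. -/
open Real

lemma wendel_aux (x s : ℝ) (hx : 0 < x) (hs : 0 < s) (hs1 : s ≤ 1) :
    Real.Gamma (x + 1) ≤ Real.Gamma (x + s) * (x + s) ^ (1 - s) := by
  have h1 : (0:ℝ) < x + s := by linarith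
  have h2 : (0:ℝ) < x + s + 1 := by linarith
  have key := Real.convexOn_log_Gamma.2 (Set.mem_Ioi.mpr h1) (Set.mem_Ioi.mpr h2)
    hs.le (by linarith : (0:ℝ) ≤ 1 - s) (by ring)
  have harg : s • (x + s) + (1 - s) • (x + s + 1) = x + 1 := by
    simp [smul_eq_mul]; ring
  rw [harg] at key
  simp only [Function.comp_apply, smul_eq_mul] at key
  have hg1 : 0 < Real.Gamma (x + 1) := Real.Gamma_pos_of_pos (by linarith)
  have hgs : 0 < Real.Gamma (x + s) := Real.Gamma_pos_of_pos h1
  have hadd : Real.Gamma (x + s + 1) = (x + s) * Real.Gamma (x + s) :=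
    Real.Gamma_add_one h1.ne'
  rw [hadd, Real.log_mul h1.ne' hgs.ne'] at key
  have key2 : Real.log (Real.Gamma (x + 1)) ≤
      Real.log (Real.Gamma (x + s)) + (1 - s) * Real.log (x + s) := by nlinarith
  calc Real.Gamma (x + 1) = Real.exp (Real.log (Real.Gamma (x + 1))) := (Real.exp_log hg1).symm
    _ ≤ Real.exp (Real.log (Real.Gamma (x + s)) + (1 - s) * Real.log (x + s)) :=
        Real.exp_le_exp.mpr key2
    _ = Real.Gamma (x + s) * (x + s) ^ (1 - s) := by
        rw [Real.exp_add, Real.exp_log hgs, Real.rpow_def_of_pos h1, mul_comm (1-s)]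

/-- The quantization-error bound from random vector quantization:
`2^B · Β(2^B, M/(M-1)) ≤ Γ((2M-1)/(M-1)) · 2^{-B/(M-1)}`, where the Beta function is
expressed as `Β(x,y) = Γ(x)Γ(y)/Γ(x+y)`. -/
theorem stmt11 (B M : ℕ) (hM : 2 ≤ M) :
    (2 : ℝ) ^ B *
        (Real.Gamma ((2 : ℝ) ^ B) * Real.Gamma ((M : ℝ) / ((M : ℝ) - 1)) /
          Real.Gamma ((2 : ℝ) ^ B + (M : ℝ) / ((M : ℝ) - 1))) ≤
      Real.Gamma ((2 * (M : ℝ) - 1) / ((M : ℝ) - 1)) *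
        (2 : ℝ) ^ (-(B : ℝ) / ((M : ℝ) - 1)) := by
  have hm1 : (1:ℝ) ≤ (M:ℝ) - 1 := by
    have : (2:ℝ) ≤ (M:ℝ) := by exact_mod_cast hM
    linarith
  set m : ℝ := (M:ℝ) - 1 with hmdef
  have hm0 : 0 < m := by linarith
  set s : ℝ := 1 / m with hsdef
  have hs0 : 0 < s := by positivity
  have hs1 : s ≤ 1 := by rw [hsdef, div_le_one hm0]; linarith
  have halpha : (M:ℝ) / m = 1 + s := by
    rw [hsdef]; field_simp; rw [hmdef]; ring
  have halpha2 : (2 * (M:ℝ) - 1) / m = (1 + s) + 1 := by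
    rw [hsdef]; field_simp; ring
  set n : ℝ := (2:ℝ) ^ B with hndef
  have hn1 : (1:ℝ) ≤ n := one_le_pow₀ (by norm_num)
  have hn0 : 0 < n := by linarith
  -- rewrite the rpow
  have hr : (2:ℝ) ^ (-(B : ℝ) / m) = n ^ (-s) := by
    rw [hndef, ← Real.rpow_natCast 2 B, ← Real.rpow_mul (by norm_num)]
    ring_nf
    rw [hsdef, one_div]
  rw [hr, halpha, halpha2]
  have hgs : 0 < Real.Gamma (1 + s) := Real.Gamma_pos_of_pos (by linarith)
  have hga : Real.Gamma (1 + s + 1) = (1 + s) * Real.Gamma (1 + s) :=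
    Real.Gamma_add_one (by linarith)
  have hgn : n * Real.Gamma n = Real.Gamma (n + 1) := (Real.Gamma_add_one hn0.ne').symm
  have hns : 0 < n + s := by linarith
  have hsum : Real.Gamma (n + (1 + s)) = (n + s) * Real.Gamma (n + s) := by
    have : n + (1 + s) = (n + s) + 1 := by ring
    rw [this, Real.Gamma_add_one hns.ne']
  have hgns : 0 < Real.Gamma (n + s) := Real.Gamma_pos_of_pos hns
  have hgsum : 0 < Real.Gamma (n + (1 + s)) := by rw [hsum]; positivity
  rw [hga, mul_div_assoc', show n * (Real.Gamma n * Real.Gamma (1 + s)) = Real.Gamma (n + 1) * Real.Gamma (1 + s)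
    from by rw [← hgn]; ring, div_le_iff₀ hgsum, hsum]
  -- Γ(n+1) * Γ(1+s) ≤ (1+s) * Γ(1+s) * n^(-s) * ((n+s) * Γ(n+s))
  have hw := wendel_aux n s hn0 hs0 hs1
  have hpow : (n + s) ^ (1 - s) ≤ (1 + s) * n ^ (-s) * (n + s) := by
    have h1 : (n + s) ^ (1 - s) = (n + s) * (n + s) ^ (-s) := by
      rw [show (1 : ℝ) - s = 1 + -s by ring, Real.rpow_add hns, Real.rpow_one]
    have h2 : (n + s) ^ (-s) ≤ n ^ (-s) :=
      Real.rpow_le_rpow_of_nonpos hn0 (by linarith) (by linarith)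
    have h3 : (0:ℝ) < n ^ (-s) := Real.rpow_pos_of_pos hn0 _
    have h4 : (0:ℝ) ≤ (n + s) ^ (-s) := (Real.rpow_pos_of_pos hns _).le
    rw [h1]
    nlinarith [mul_le_mul_of_nonneg_left h2 hns.le, mul_pos h3 hns]
  calc Real.Gamma (n + 1) * Real.Gamma (1 + s)
      ≤ (Real.Gamma (n + s) * (n + s) ^ (1 - s)) * Real.Gamma (1 + s) := by
        exact mul_le_mul_of_nonneg_right hw hgs.le
    _ ≤ (Real.Gamma (n + s) * ((1 + s) * n ^ (-s) * (n + s))) * Real.Gamma (1 + s) := by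
        exact mul_le_mul_of_nonneg_right (mul_le_mul_of_nonneg_left hpow hgns.le) hgs.le
    _ = (1 + s) * Real.Gamma (1 + s) * n ^ (-s) * ((n + s) * Real.Gamma (n + s)) := by ring
end
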